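/- θ* = 0 is the unique maximizer of M over Θ: for every θ ∈ Θ with θ ≠ 0, M(θ) < M(0). -/

import Mathlib

open MeasureTheory ProbabilityTheory Filter

/-- The `N(θ,1)` density `φ(y|θ)`. -/
noncomputable def npdf (y θ : ℝ) : ℝ :=
  Real.exp (-(y - θ) ^ 2 / 2) / Real.sqrt (2 * Real.pi)

/-- `m_θ(y,γ) = log((1−γ)φ(y|0) + γφ(y|θ))`. -/
noncomputable def mFun (θ : ℝ) (p : ℝ × ℝ) : ℝ :=
  Real.log ((1 - p.2) * npdf p.1 0 + p.2 * npdf p.1 θ)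

/-!
Writing the mixture density as `φ(y|0) · r_θ(y,γ)` with the likelihood ratio
`r_θ(y,γ) = 1 - γ + γ exp(θy - θ²/2)`, we get `M(θ) - M(0) = E[log r_θ]`. Under the null model
`E[r_θ] = 1`, since `exp(θY - θ²/2)` has mean one, so Gibbs' inequality `log x ≤ x - 1` gives
`E[log r_θ] ≤ 0`, with equality only if `r_θ = 1` almost surely. For `θ ≠ 0` that would force
`γ = 0` almost surely (as `Y ≠ θ/2` a.s.), which the positive variance of `G` excludes.
-/
open Real

section Elementary

variable {γ t : ℝ}

lemma one_sub_add_mul_exp_pos (h0 : 0 ≤ γ) (h1 : γ ≤ 1) : 0 < 1 - γ + γ * exp t := by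
  rcases h1.lt_or_eq with h1 | rfl
  · nlinarith [exp_pos t]
  · simp [exp_pos]

lemma abs_log_one_sub_add_mul_exp_le (h0 : 0 ≤ γ) (h1 : γ ≤ 1) :
    |log (1 - γ + γ * exp t)| ≤ |t| := by
  have hpos := one_sub_add_mul_exp_pos (t := t) h0 h1
  rcases le_total 0 t with ht | ht
  · have hle : 1 - γ + γ * exp t ≤ exp t := by nlinarith [one_le_exp ht]
    have hge : 1 ≤ 1 - γ + γ * exp t := by nlinarith [one_le_exp ht]
    rw [abs_of_nonneg (log_nonneg hge), abs_of_nonneg ht]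
    simpa using log_le_log hpos hle
  · have hle : 1 - γ + γ * exp t ≤ 1 := by nlinarith [exp_le_one_iff.2 ht]
    have hge : exp t ≤ 1 - γ + γ * exp t := by nlinarith [exp_le_one_iff.2 ht]
    rw [abs_of_nonpos (log_nonpos hpos.le hle), abs_of_nonpos ht, neg_le_neg_iff]
    simpa using log_le_log (exp_pos t) hge

lemma one_sub_add_mul_exp_eq_one_iff : 1 - γ + γ * exp t = 1 ↔ γ = 0 ∨ t = 0 := by
  rw [← exp_eq_one_iff t, ← sub_eq_zero (a := exp t), ← mul_eq_zero]
  constructor <;> intro h <;> linarith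

end Elementary

lemma integral_log_lt_zero_of_integral_eq_one {α : Type*} [MeasurableSpace α] {μ : Measure α}
    [IsProbabilityMeasure μ] {f : α → ℝ} (hf_pos : ∀ᵐ x ∂μ, 0 < f x) (hf : Integrable f μ)
    (hlog : Integrable (fun x => log (f x)) μ) (h_int : ∫ x, f x ∂μ = 1)
    (h_ne : ¬ ∀ᵐ x ∂μ, f x = 1) : ∫ x, log (f x) ∂μ < 0 := by
  by_contra! hlog_nonneg
  have hgap_nonneg : 0 ≤ᵐ[μ] fun x => f x - 1 - log (f x) := by
    filter_upwards [hf_pos] with x hx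
    simp only [Pi.zero_apply]
    linarith [log_le_sub_one_of_pos hx]
  have hgap_int : ∫ x, (f x - 1 - log (f x)) ∂μ = -∫ x, log (f x) ∂μ := by
    rw [integral_sub (f := fun x => f x - 1) (hf.sub (integrable_const 1)) hlog,
      integral_sub hf (integrable_const 1), h_int]
    simp
  have hgap_zero : (fun x => f x - 1 - log (f x)) =ᵐ[μ] 0 :=
    (integral_eq_zero_iff_of_nonneg_ae hgap_nonneg ((hf.sub (integrable_const 1)).sub hlog)).1
      (le_antisymm (by linarith) (integral_nonneg_of_ae hgap_nonneg))
  refine h_ne ?_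
  filter_upwards [hf_pos, hgap_zero] with x hx hx0
  by_contra hne
  have := log_lt_sub_one_of_pos hx hne
  simp only [Pi.zero_apply] at hx0
  linarith

lemma npdf_pos (y θ : ℝ) : 0 < npdf y θ := by
  unfold npdf
  positivity

lemma npdf_eq_mul_exp (y θ : ℝ) : npdf y θ = npdf y 0 * exp (θ * y - θ ^ 2 / 2) := by
  unfold npdf
  rw [div_mul_eq_mul_div, ← exp_add]
  ring_nf

lemma log_npdf_zero (y : ℝ) : log (npdf y 0) = -y ^ 2 / 2 - log (sqrt (2 * π)) := by
  unfold npdf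
  rw [log_div (exp_ne_zero _) (by positivity), log_exp, sub_zero]

lemma integrable_log_npdf_zero : Integrable (fun y => log (npdf y 0)) (gaussianReal 0 1) := by
  simp_rw [log_npdf_zero]
  exact (((memLp_id_gaussianReal 2).integrable_sq.neg.div_const 2).sub (integrable_const _) :)

lemma integral_exp_mul_gaussianReal {μ : ℝ} {v : NNReal} (t : ℝ) :
    ∫ x, exp (t * x) ∂gaussianReal μ v = exp (μ * t + v * t ^ 2 / 2) :=
  mgf_gaussianReal (by simp) t

lemma integrable_exp_mul_sub_gaussianReal (θ : ℝ) :
    Integrable (fun y => exp (θ * y - θ ^ 2 / 2)) (gaussianReal 0 1) := by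
  simp_rw [exp_sub]
  exact (integrable_exp_mul_gaussianReal θ).div_const _

lemma integral_exp_mul_sub_gaussianReal (θ : ℝ) :
    ∫ y, exp (θ * y - θ ^ 2 / 2) ∂gaussianReal 0 1 = 1 := by
  simp_rw [exp_sub]
  rw [integral_div, integral_exp_mul_gaussianReal]
  simp

noncomputable def likelihoodRatio (θ : ℝ) (p : ℝ × ℝ) : ℝ :=
  1 - p.2 + p.2 * exp (θ * p.1 - θ ^ 2 / 2)

lemma mFun_eq_log_npdf_add_log_likelihoodRatio {θ : ℝ} {p : ℝ × ℝ} (hp : p.2 ∈ Set.Icc 0 1) :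
    mFun θ p = log (npdf p.1 0) + log (likelihoodRatio θ p) := by
  have hpos := one_sub_add_mul_exp_pos (t := θ * p.1 - θ ^ 2 / 2) hp.1 hp.2
  rw [mFun, likelihoodRatio, ← log_mul (npdf_pos _ _).ne' hpos.ne', npdf_eq_mul_exp p.1 θ]
  ring_nf

section NullModel

variable {G : Measure ℝ}

lemma not_ae_eq_zero_of_variance_pos (hVar : 0 < (∫ x, x ^ 2 ∂G) - (∫ x, x ∂G) ^ 2) :
    ¬ ∀ᵐ x ∂G, x = 0 := by
  intro h
  rw [integral_congr_ae (h.mono fun x hx => by simp [hx] : (fun x => x ^ 2) =ᵐ[G] 0),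
    integral_congr_ae (h.mono fun x hx => by simp [hx] : (fun x => x) =ᵐ[G] 0)] at hVar
  simp at hVar

lemma likelihoodRatio_eq_one_add (θ : ℝ) :
    likelihoodRatio θ = fun p => 1 + (exp (θ * p.1 - θ ^ 2 / 2) - 1) * p.2 := by
  ext p
  simp only [likelihoodRatio]
  ring

lemma integrable_exp_mul_sub_sub_one_mul_snd [IsProbabilityMeasure G]
    (hG : ∀ᵐ x ∂G, x ∈ Set.Icc (0 : ℝ) 1) (θ : ℝ) :
    Integrable (fun p : ℝ × ℝ => (exp (θ * p.1 - θ ^ 2 / 2) - 1) * p.2)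
      ((gaussianReal 0 1).prod G) :=
  ((integrable_exp_mul_sub_gaussianReal θ).sub (integrable_const 1)).mul_prod
    (Integrable.of_mem_Icc 0 1 aemeasurable_id hG)

lemma integrable_likelihoodRatio [IsProbabilityMeasure G]
    (hG : ∀ᵐ x ∂G, x ∈ Set.Icc (0 : ℝ) 1) (θ : ℝ) :
    Integrable (likelihoodRatio θ) ((gaussianReal 0 1).prod G) := by
  rw [likelihoodRatio_eq_one_add]
  exact (integrable_const 1).add (integrable_exp_mul_sub_sub_one_mul_snd hG θ)

lemma integral_likelihoodRatio [IsProbabilityMeasure G] (hG : ∀ᵐ x ∂G, x ∈ Set.Icc (0 : ℝ) 1)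
    (θ : ℝ) : ∫ p, likelihoodRatio θ p ∂(gaussianReal 0 1).prod G = 1 := by
  rw [likelihoodRatio_eq_one_add,
    integral_add (integrable_const 1) (integrable_exp_mul_sub_sub_one_mul_snd hG θ),
    integral_prod_mul (fun y => exp (θ * y - θ ^ 2 / 2) - 1) (fun x => x),
    integral_sub (integrable_exp_mul_sub_gaussianReal θ) (integrable_const 1),
    integral_exp_mul_sub_gaussianReal]
  simp

lemma integrable_log_likelihoodRatio [IsProbabilityMeasure G]
    (hG : ∀ᵐ x ∂G, x ∈ Set.Icc (0 : ℝ) 1) (θ : ℝ) :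
    Integrable (fun p => log (likelihoodRatio θ p)) ((gaussianReal 0 1).prod G) := by
  have hlin : Integrable (fun y => θ * y - θ ^ 2 / 2) (gaussianReal 0 1) :=
    ((memLp_one_iff_integrable.1 (memLp_id_gaussianReal 1)).const_mul θ).sub (integrable_const _)
  have hmeas : Measurable (likelihoodRatio θ) := by
    unfold likelihoodRatio
    fun_prop
  refine Integrable.mono' (hlin.abs.comp_fst G) hmeas.log.aestronglyMeasurable ?_
  filter_upwards [Measure.quasiMeasurePreserving_snd.ae hG] with p hp
  exact abs_log_one_sub_add_mul_exp_le hp.1 hp.2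

lemma not_ae_likelihoodRatio_eq_one [SFinite G] {θ : ℝ} (hθ : θ ≠ 0)
    (hG0 : ¬ ∀ᵐ x ∂G, x = 0) : ¬ ∀ᵐ p ∂(gaussianReal 0 1).prod G, likelihoodRatio θ p = 1 := by
  intro h
  have hy : ∀ᵐ y ∂gaussianReal 0 1, y ≠ θ / 2 :=
    (gaussianReal_absolutelyContinuous 0 one_ne_zero).ae_le (Measure.ae_ne volume _)
  obtain ⟨y, hy, hyG⟩ := (hy.and (Measure.ae_ae_of_ae_prod h)).exists
  refine hG0 (hyG.mono fun x hx => ?_)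
  refine (one_sub_add_mul_exp_eq_one_iff.1 hx).resolve_right fun ht => hy ?_
  have : θ * (y - θ / 2) = 0 := by linarith
  linarith [(mul_eq_zero.1 this).resolve_left hθ]

lemma integral_log_likelihoodRatio_neg [IsProbabilityMeasure G]
    (hG : ∀ᵐ x ∂G, x ∈ Set.Icc (0 : ℝ) 1) (hG0 : ¬ ∀ᵐ x ∂G, x = 0) {θ : ℝ} (hθ : θ ≠ 0) :
    ∫ p, log (likelihoodRatio θ p) ∂(gaussianReal 0 1).prod G < 0 :=
  integral_log_lt_zero_of_integral_eq_one
    ((Measure.quasiMeasurePreserving_snd.ae hG).mono fun _ hp =>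
      one_sub_add_mul_exp_pos hp.1 hp.2)
    (integrable_likelihoodRatio hG θ) (integrable_log_likelihoodRatio hG θ)
    (integral_likelihoodRatio hG θ) (not_ae_likelihoodRatio_eq_one hθ hG0)

lemma integral_mFun [IsProbabilityMeasure G] (hG : ∀ᵐ x ∂G, x ∈ Set.Icc (0 : ℝ) 1) (θ : ℝ) :
    ∫ p, mFun θ p ∂(gaussianReal 0 1).prod G =
      ∫ p, log (npdf p.1 0) ∂(gaussianReal 0 1).prod G +
        ∫ p, log (likelihoodRatio θ p) ∂(gaussianReal 0 1).prod G := by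
  rw [← integral_add (integrable_log_npdf_zero.comp_fst G) (integrable_log_likelihoodRatio hG θ)]
  exact integral_congr_ae
    ((Measure.quasiMeasurePreserving_snd.ae hG).mono fun _ hp =>
      mFun_eq_log_npdf_add_log_likelihoodRatio hp)

end NullModel

theorem stmt13_general (G : Measure ℝ) [IsProbabilityMeasure G]
    (hG : ∀ᵐ x ∂G, x ∈ Set.Icc (0 : ℝ) 1)
    (hVar : 0 < (∫ x, x ^ 2 ∂G) - (∫ x, x ∂G) ^ 2)
    (K : ℝ)
    (M : ℝ → ℝ) (hM : ∀ θ, M θ = ∫ p, mFun θ p ∂((gaussianReal 0 1).prod G)) :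
    ∀ θ ∈ Set.Icc (-K) K, θ ≠ 0 → M θ < M 0 := by
  intro θ _ hθ
  have hlr_zero : ∀ p, likelihoodRatio 0 p = 1 := fun p => by simp [likelihoodRatio]
  rw [hM, hM, integral_mFun hG, integral_mFun hG]
  simp only [hlr_zero, log_one, integral_zero, add_zero]
  linarith [integral_log_likelihoodRatio_neg hG (not_ae_eq_zero_of_variance_pos hVar) hθ]

/-- Under the null model (`Y` standard normal, independent of `γ ~ G`), `θ* = 0` is the
unique maximizer of `M(θ) = E[m_θ(Y,γ)]` over `Θ = [−K,K]`: `M(θ) < M(0)` for `θ ≠ 0`. -/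
theorem stmt13 (G : Measure ℝ) [IsProbabilityMeasure G]
    (hG : ∀ᵐ x ∂G, x ∈ Set.Icc (0 : ℝ) 1)
    (hVar : 0 < (∫ x, x ^ 2 ∂G) - (∫ x, x ∂G) ^ 2)
    (hlog : Integrable (fun x => -Real.log (1 - x)) G)
    (K : ℝ) (hK : 0 < K)
    (M : ℝ → ℝ) (hM : ∀ θ, M θ = ∫ p, mFun θ p ∂((gaussianReal 0 1).prod G)) :
    ∀ θ ∈ Set.Icc (-K) K, θ ≠ 0 → M θ < M 0 :=
  stmt13_general G hG hVar K M hM
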